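/- The sequent !(r / (p / q)), s → s is not derivable in !L*, where p, q, r, s are distinct variables. -/

import Mathlib

/-- Formulae (types) of the Lambek calculus with a modality:
`var` = primitive type, `div B A` = B / A, `ldiv A B` = A \ B, `bang A` = !A. -/
inductive Fm : Type
  | var : ℕ → Fm
  | div : Fm → Fm → Fm
  | ldiv : Fm → Fm → Fm
  | bang : Fm → Fm
  deriving DecidableEq

open Fm

/-- The calculus !L*: the Lambek calculus L* (with empty antecedents allowed)
extended with a relevant modality `!` with rules (!→), (→!), (perm₁), (perm₂), (contr). -/
inductive BangL : List Fm → Fm → Prop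
  | ax (A : Fm) : BangL [A] A
  | divL (Γ Δ₁ Δ₂ : List Fm) (A B C : Fm) :
      BangL Γ A → BangL (Δ₁ ++ B :: Δ₂) C →
      BangL (Δ₁ ++ div B A :: (Γ ++ Δ₂)) C
  | divR (Γ : List Fm) (A B : Fm) :
      BangL (Γ ++ [A]) B → BangL Γ (div B A)
  | ldivL (Γ Δ₁ Δ₂ : List Fm) (A B C : Fm) :
      BangL Γ A → BangL (Δ₁ ++ B :: Δ₂) C →
      BangL (Δ₁ ++ Γ ++ ldiv A B :: Δ₂) C
  | ldivR (Γ : List Fm) (A B : Fm) :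
      BangL (A :: Γ) B → BangL Γ (ldiv A B)
  | bangL (Γ₁ Γ₂ : List Fm) (A C : Fm) :
      BangL (Γ₁ ++ A :: Γ₂) C → BangL (Γ₁ ++ bang A :: Γ₂) C
  | bangR (Γ : List Fm) (B : Fm) :
      BangL (Γ.map bang) B → BangL (Γ.map bang) (bang B)
  | perm1 (Δ₁ Γ Δ₂ : List Fm) (A C : Fm) :
      BangL (Δ₁ ++ bang A :: (Γ ++ Δ₂)) C → BangL (Δ₁ ++ Γ ++ bang A :: Δ₂) C
  | perm2 (Δ₁ Γ Δ₂ : List Fm) (A C : Fm) :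
      BangL (Δ₁ ++ Γ ++ bang A :: Δ₂) C → BangL (Δ₁ ++ bang A :: (Γ ++ Δ₂)) C
  | contr (Δ₁ Δ₂ : List Fm) (A C : Fm) :
      BangL (Δ₁ ++ bang A :: bang A :: Δ₂) C → BangL (Δ₁ ++ bang A :: Δ₂) C

/-!
Interpret formulas as subsets of a join-semilattice with bottom, i.e. of a commutative idempotent
monoid, with `!A` read as `A`: commutativity and idempotence of `⊔` make permutation and
contraction sound, and the Lambek divisions are the residuals of the pointwise join of sets.
Taking `p` empty and every other variable equal to `{⊥}` makes `p / q` empty, hence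
`r / (p / q)` everything, so `⊤` lies in the interpretation of the antecedent but not in `{⊥}`.
-/

open scoped SetFamily
open Set

namespace Fm

section Interp

variable {M : Type*} [SemilatticeSup M] (v : ℕ → Set M)

def interp : Fm → Set M
  | var n => v n
  | div B A => {x | ∀ y ∈ A.interp, x ⊔ y ∈ B.interp}
  | ldiv A B => {x | ∀ y ∈ A.interp, y ⊔ x ∈ B.interp}
  | bang A => A.interp

@[simp]
lemma interp_bang (A : Fm) : (bang A).interp v = A.interp v := rfl

lemma subset_interp_div {S : Set M} {A B : Fm} :
    S ⊆ (div B A).interp v ↔ S ⊻ A.interp v ⊆ B.interp v :=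
  sups_subset_iff.symm

lemma subset_interp_ldiv {S : Set M} {A B : Fm} :
    S ⊆ (ldiv A B).interp v ↔ A.interp v ⊻ S ⊆ B.interp v := by
  rw [sups_subset_iff]
  exact forall₂_comm

lemma interp_div_of_eq_empty {A : Fm} (B : Fm) (hA : A.interp v = ∅) :
    (div B A).interp v = univ := by
  simp [interp, hA]

variable [OrderBot M]

def interpCtx : List Fm → Set M
  | [] => {⊥}
  | A :: Γ => A.interp v ⊻ interpCtx Γ

@[simp]
lemma interpCtx_cons (A : Fm) (Γ : List Fm) :
    interpCtx v (A :: Γ) = A.interp v ⊻ interpCtx v Γ := rfl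

@[simp]
lemma interpCtx_append (Γ Δ : List Fm) :
    interpCtx v (Γ ++ Δ) = interpCtx v Γ ⊻ interpCtx v Δ := by
  induction Γ with
  | nil => simp [interpCtx, singleton_sups]
  | cons A Γ ih => rw [List.cons_append, interpCtx_cons, interpCtx_cons, ih, sups_assoc]

lemma interpCtx_singleton (A : Fm) : interpCtx v [A] = A.interp v := by
  simp [interpCtx, sups_singleton]

end Interp

end Fm

open Fm

theorem BangL.interpCtx_subset_interp {M : Type*} [SemilatticeSup M] [OrderBot M]
    (v : ℕ → Set M) {Γ : List Fm} {C : Fm} (h : BangL Γ C) :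
    interpCtx v Γ ⊆ C.interp v := by
  induction h with
  | ax A => rw [interpCtx_singleton]
  | divL Γ Δ₁ Δ₂ A B C _ _ ihA ihC =>
    have hB : (div B A).interp v ⊻ interpCtx v Γ ⊆ B.interp v :=
      (sups_subset_left ihA).trans ((subset_interp_div v).1 subset_rfl)
    simp only [interpCtx_append, interpCtx_cons] at ihC ⊢
    rw [← sups_assoc ((div B A).interp v)]
    exact (sups_subset_left (sups_subset_right hB)).trans ihC
  | divR Γ A B _ ih =>
    rwa [interpCtx_append, interpCtx_singleton, ← subset_interp_div] at ih
  | ldivL Γ Δ₁ Δ₂ A B C _ _ ihA ihC =>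
    have hB : interpCtx v Γ ⊻ (ldiv A B).interp v ⊆ B.interp v :=
      (sups_subset_right ihA).trans ((subset_interp_ldiv v).1 subset_rfl)
    simp only [interpCtx_append, interpCtx_cons, sups_assoc] at ihC ⊢
    rw [← sups_assoc (interpCtx v Γ)]
    exact (sups_subset_left (sups_subset_right hB)).trans ihC
  | ldivR Γ A B _ ih => exact (subset_interp_ldiv v).2 ih
  | bangL Γ₁ Γ₂ A C _ ih => simpa using ih
  | bangR Γ B _ ih => exact ih
  | perm1 Δ₁ Γ Δ₂ A C _ ih =>
    simp only [interpCtx_append, interpCtx_cons, sups_assoc] at ih ⊢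
    rwa [sups_left_comm (interpCtx v Γ)]
  | perm2 Δ₁ Γ Δ₂ A C _ ih =>
    simp only [interpCtx_append, interpCtx_cons, sups_assoc] at ih ⊢
    rwa [sups_left_comm (interpCtx v Γ)] at ih
  | contr Δ₁ Δ₂ A C _ ih =>
    simp only [interpCtx_append, interpCtx_cons] at ih ⊢
    refine (sups_subset_left ?_).trans ih
    rw [← sups_assoc]
    exact sups_subset_right subset_sups_self

theorem stmt4 (p q r s : ℕ) (hpq : p ≠ q) (hps : p ≠ s) :
    ¬ BangL [bang (div (var r) (div (var p) (var q))), var s] (var s) := by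
  intro h
  let v : ℕ → Set Bool := fun n => if n = p then ∅ else {⊥}
  have hq : (var q).interp v = {⊥} := if_neg hpq.symm
  have hs : (var s).interp v = {⊥} := if_neg hps.symm
  have hpq_empty : (div (var p) (var q)).interp v = ∅ :=
    eq_empty_of_forall_notMem fun x hx => by simpa [interp, v] using hx ⊥ (hq ▸ rfl)
  have hmem : ⊤ ∈ interpCtx v [bang (div (var r) (div (var p) (var q))), var s] := by
    rw [interpCtx_cons, interpCtx_singleton, hs, interp_bang, interp_div_of_eq_empty v _ hpq_empty]
    exact mem_sups.2 ⟨⊤, mem_univ _, ⊥, rfl, sup_bot_eq _⟩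
  exact absurd (h.interpCtx_subset_interp v hmem) (by simp [hs])
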